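/- Let f : ℝ^{m×n} → ℝ have λ-Lipschitz gradient, let V ∈ ℝ^{n×k} have orthonormal columns, let X ∈ {L Vᵀ : L ∈ ℝ^{m×k}}, and let X₊ minimize f over this subspace T_V. Then f(X) − f(X₊) ≥ (1/(2λ))‖∇f(X)VVᵀ‖_F². -/

import Mathlib

open Matrix

/-- Frobenius inner product of two real matrices. -/
def frobInner {m n : ℕ} (A B : Matrix (Fin m) (Fin n) ℝ) : ℝ := ∑ i, ∑ j, A i j * B i j

/-- Frobenius norm of a real matrix. -/
noncomputable def frobNorm {m n : ℕ} (A : Matrix (Fin m) (Fin n) ℝ) : ℝ :=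
  Real.sqrt (frobInner A A)

/-- Spectral norm (largest singular value) of a real matrix, as the operator norm
of the induced linear map between Euclidean spaces. -/
noncomputable def specNorm {m n : ℕ} (A : Matrix (Fin m) (Fin n) ℝ) : ℝ :=
  ‖LinearMap.toContinuousLinearMap (Matrix.toEuclideanLin A)‖
attribute [local instance] Matrix.frobeniusNormedAddCommGroup Matrix.frobeniusNormedSpace

/-- The continuous linear functional `H ↦ ⟨A, H⟩_F`; `HasFDerivAt f (frobInnerCLM (Gf X)) X`
expresses that `Gf X` is the (Frobenius) gradient of `f` at `X`. -/
noncomputable def frobInnerCLM {m n : ℕ} (A : Matrix (Fin m) (Fin n) ℝ) :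
    Matrix (Fin m) (Fin n) ℝ →L[ℝ] ℝ :=
  LinearMap.toContinuousLinearMap
    { toFun := fun H => frobInner A H
      map_add' := by intro H K; simp [frobInner, mul_add, Finset.sum_add_distrib]
      map_smul' := by intro c H; simp [frobInner, Finset.mul_sum, mul_left_comm] }

/-!
Descent lemma: a `λ`-Lipschitz gradient gives `f (X + D) ≤ f X + ⟪∇f X, D⟫ + λ/2 ‖D‖²`.
Take for `D` the projected gradient step `-λ⁻¹ ∇f(X) V Vᵀ`; it lies in `T_V`, and so does `X + D`,
whence `f X₊ ≤ f (X + D)`. Since `V Vᵀ` is an orthogonal projection,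
`⟪∇f X, ∇f(X) V Vᵀ⟫ = ‖∇f(X) V Vᵀ‖²`, and the descent bound becomes
`f (X + D) ≤ f X - (2λ)⁻¹ ‖∇f(X) V Vᵀ‖²`.
-/

theorem le_add_fderiv_add_of_fderiv_sub_le {E : Type*} [NormedAddCommGroup E]
    [NormedSpace ℝ E] {f : E → ℝ} {f' : E → E →L[ℝ] ℝ} {L : ℝ}
    (hf : ∀ x, HasFDerivAt f (f' x) x) (hL : ∀ x y d, f' y d - f' x d ≤ L * ‖y - x‖ * ‖d‖)
    (x d : E) :
    f (x + d) ≤ f x + f' x d + L / 2 * ‖d‖ ^ 2 := by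
  set g : ℝ → ℝ := fun t => f (x + t • d) - t * f' x d - L / 2 * t ^ 2 * ‖d‖ ^ 2
  have hg : ∀ t, HasDerivAt g (f' (x + t • d) d - f' x d - L * t * ‖d‖ ^ 2) t := by
    intro t
    have hline : HasDerivAt (fun s : ℝ => x + s • d) d t := by
      simpa using ((hasDerivAt_id t).smul_const d).const_add x
    refine ((((hf _).comp_hasDerivAt t hline).sub ((hasDerivAt_id t).mul_const (f' x d))).sub
      (((hasDerivAt_pow 2 t).const_mul (L / 2)).mul_const (‖d‖ ^ 2))).congr_deriv ?_
    simp only [Nat.cast_ofNat]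
    ring
  have hg_nonpos : ∀ t ∈ interior (Set.Icc (0 : ℝ) 1),
      f' (x + t • d) d - f' x d - L * t * ‖d‖ ^ 2 ≤ 0 := by
    intro t ht
    rw [interior_Icc] at ht
    have := hL x (x + t • d) d
    rw [add_sub_cancel_left, norm_smul, Real.norm_of_nonneg ht.1.le] at this
    linarith
  have hanti : AntitoneOn g (Set.Icc 0 1) :=
    antitoneOn_of_hasDerivWithinAt_nonpos (convex_Icc 0 1)
      (fun t _ => (hg t).continuousAt.continuousWithinAt)
      (fun t _ => (hg t).hasDerivWithinAt) hg_nonpos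
  have h01 := hanti (by simp) (by simp) zero_le_one
  simp only [g, one_smul, zero_smul, add_zero, one_mul, one_pow, zero_mul] at h01
  linarith

section Frobenius

variable {m n : ℕ}

-- Under the Frobenius instance, `‖A‖` is by definition the norm of this element of `ℓ²(ℓ²)`.
open WithLp in
lemma frobInner_eq_inner (A B : Matrix (Fin m) (Fin n) ℝ) :
    frobInner A B =
      inner ℝ (toLp 2 fun i => toLp 2 (A i)) (toLp 2 fun i => toLp 2 (B i)) := by
  simp [frobInner, PiLp.inner_apply, mul_comm]

lemma abs_frobInner_le (A B : Matrix (Fin m) (Fin n) ℝ) : |frobInner A B| ≤ ‖A‖ * ‖B‖ := by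
  rw [frobInner_eq_inner]
  exact abs_real_inner_le_norm _ _

lemma frobInner_self (A : Matrix (Fin m) (Fin n) ℝ) : frobInner A A = ‖A‖ ^ 2 := by
  rw [frobInner_eq_inner]
  exact real_inner_self_eq_norm_sq _

lemma frobNorm_eq_norm (A : Matrix (Fin m) (Fin n) ℝ) : frobNorm A = ‖A‖ := by
  rw [frobNorm, frobInner_self, Real.sqrt_sq (norm_nonneg A)]

lemma frobInner_eq_trace (A B : Matrix (Fin m) (Fin n) ℝ) : frobInner A B = (Aᵀ * B).trace := by
  simp only [frobInner, trace, diag, mul_apply, transpose_apply]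
  exact Finset.sum_comm

lemma frobInner_mul_right {k : ℕ} (A : Matrix (Fin m) (Fin n) ℝ) (B : Matrix (Fin m) (Fin k) ℝ)
    (P : Matrix (Fin k) (Fin n) ℝ) : frobInner A (B * P) = frobInner (A * Pᵀ) B := by
  rw [frobInner_eq_trace, frobInner_eq_trace, transpose_mul, transpose_transpose,
    ← Matrix.mul_assoc, trace_mul_comm, Matrix.mul_assoc]

lemma frobInner_mul_eq_norm_sq {P : Matrix (Fin n) (Fin n) ℝ} (hsymm : Pᵀ = P)
    (hidem : P * P = P) (G : Matrix (Fin m) (Fin n) ℝ) : frobInner G (G * P) = ‖G * P‖ ^ 2 := by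
  rw [← frobInner_self, frobInner_mul_right, frobInner_mul_right, hsymm, Matrix.mul_assoc, hidem]

lemma frobInner_smul_right (c : ℝ) (A B : Matrix (Fin m) (Fin n) ℝ) :
    frobInner A (c • B) = c * frobInner A B := by
  simp only [frobInner, Matrix.smul_apply, smul_eq_mul, Finset.mul_sum, mul_left_comm]

lemma frobInner_sub_frobInner_le (A B H : Matrix (Fin m) (Fin n) ℝ) :
    frobInner A H - frobInner B H ≤ ‖A - B‖ * ‖H‖ :=
  calc frobInner A H - frobInner B H = frobInner (A - B) H := by
        simp only [frobInner, Matrix.sub_apply, sub_mul, Finset.sum_sub_distrib]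
    _ ≤ ‖A - B‖ * ‖H‖ := (le_abs_self _).trans (abs_frobInner_le _ _)

lemma frobInner_sub_frobInner_le_of_lipschitz
    {Gf : Matrix (Fin m) (Fin n) ℝ → Matrix (Fin m) (Fin n) ℝ} {lam : ℝ}
    (hLip : ∀ X Y, frobNorm (Gf X - Gf Y) ≤ lam * frobNorm (X - Y))
    (X Y D : Matrix (Fin m) (Fin n) ℝ) :
    frobInner (Gf Y) D - frobInner (Gf X) D ≤ lam * ‖Y - X‖ * ‖D‖ := by
  refine (frobInner_sub_frobInner_le _ _ D).trans ?_
  rw [← frobNorm_eq_norm (Gf Y - Gf X), ← frobNorm_eq_norm (Y - X)]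
  exact mul_le_mul_of_nonneg_right (hLip Y X) (norm_nonneg D)

lemma frobInner_mul_mul_transpose_eq_norm_sq {k : ℕ} {V : Matrix (Fin n) (Fin k) ℝ}
    (hV : Vᵀ * V = 1) (G : Matrix (Fin m) (Fin n) ℝ) :
    frobInner G (G * V * Vᵀ) = ‖G * V * Vᵀ‖ ^ 2 := by
  rw [Matrix.mul_assoc G]
  refine frobInner_mul_eq_norm_sq (by rw [transpose_mul, transpose_transpose]) ?_ G
  rw [Matrix.mul_assoc, ← Matrix.mul_assoc Vᵀ, hV, Matrix.one_mul]

end Frobenius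

theorem half_step_decrease_general
    {m n k : ℕ} (f : Matrix (Fin m) (Fin n) ℝ → ℝ)
    (Gf : Matrix (Fin m) (Fin n) ℝ → Matrix (Fin m) (Fin n) ℝ)
    (hgrad : ∀ X, HasFDerivAt f (frobInnerCLM (Gf X)) X)
    (lam : ℝ)
    (hLip : ∀ X Y, frobNorm (Gf X - Gf Y) ≤ lam * frobNorm (X - Y))
    (V : Matrix (Fin n) (Fin k) ℝ) (hV : Vᵀ * V = 1)
    (X Xp : Matrix (Fin m) (Fin n) ℝ)
    (hX : ∃ L : Matrix (Fin m) (Fin k) ℝ, X = L * Vᵀ)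
    (hmin : ∀ L : Matrix (Fin m) (Fin k) ℝ, f Xp ≤ f (L * Vᵀ)) :
    f X - f Xp ≥ 1 / (2 * lam) * frobNorm (Gf X * V * Vᵀ) ^ 2 := by
  obtain ⟨L, rfl⟩ := hX
  set G := Gf (L * Vᵀ)
  have hstep : (L + (-lam⁻¹) • (G * V)) * Vᵀ = L * Vᵀ + (-lam⁻¹) • (G * V * Vᵀ) := by
    rw [Matrix.add_mul, Matrix.smul_mul]
  have hinv : lam * lam⁻¹ ^ 2 = lam⁻¹ := by
    simpa [sq, mul_comm, mul_left_comm] using mul_inv_mul_cancel lam⁻¹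
  rw [ge_iff_le, le_sub_comm, frobNorm_eq_norm]
  calc f Xp ≤ f (L * Vᵀ + (-lam⁻¹) • (G * V * Vᵀ)) := hstep ▸ hmin _
    _ ≤ f (L * Vᵀ) + frobInner G ((-lam⁻¹) • (G * V * Vᵀ))
          + lam / 2 * ‖(-lam⁻¹) • (G * V * Vᵀ)‖ ^ 2 :=
      le_add_fderiv_add_of_fderiv_sub_le hgrad (frobInner_sub_frobInner_le_of_lipschitz hLip) _ _
    _ = f (L * Vᵀ) - 1 / (2 * lam) * ‖G * V * Vᵀ‖ ^ 2 := by
      rw [frobInner_smul_right, frobInner_mul_mul_transpose_eq_norm_sq hV, norm_smul,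
        Real.norm_eq_abs, mul_pow, sq_abs, neg_sq]
      linear_combination ‖G * V * Vᵀ‖ ^ 2 / 2 * hinv

/-- **Decrease of an exact (ALS) half-step.** If `f` has `lam`-Lipschitz gradient `Gf`,
`V` has orthonormal columns, `X ∈ T_V = {L Vᵀ}`, and `Xp` minimizes `f` over `T_V`,
then `f X - f Xp ≥ (1/(2 lam)) ‖Gf X · V Vᵀ‖_F²`. -/
theorem half_step_decrease
    {m n k : ℕ} (f : Matrix (Fin m) (Fin n) ℝ → ℝ)
    (Gf : Matrix (Fin m) (Fin n) ℝ → Matrix (Fin m) (Fin n) ℝ)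
    (hgrad : ∀ X, HasFDerivAt f (frobInnerCLM (Gf X)) X)
    (lam : ℝ) (hlam : 0 < lam)
    (hLip : ∀ X Y, frobNorm (Gf X - Gf Y) ≤ lam * frobNorm (X - Y))
    (V : Matrix (Fin n) (Fin k) ℝ) (hV : Vᵀ * V = 1)
    (X Xp : Matrix (Fin m) (Fin n) ℝ)
    (hX : ∃ L : Matrix (Fin m) (Fin k) ℝ, X = L * Vᵀ)
    (hXp : ∃ L : Matrix (Fin m) (Fin k) ℝ, Xp = L * Vᵀ)
    (hmin : ∀ L : Matrix (Fin m) (Fin k) ℝ, f Xp ≤ f (L * Vᵀ)) :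
    f X - f Xp ≥ 1 / (2 * lam) * frobNorm (Gf X * V * Vᵀ) ^ 2 :=
  half_step_decrease_general f Gf hgrad lam hLip V hV X Xp hX hmin
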